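/- Let G and H be word-representable graphs, H rooted at a vertex, with |V(H)| = n and |V(G)| = m. Then l(G ∘ H) ≤ n·l(G) + m·l(H) + (n−1)·κ_G, where l is the minimum word-representant length and κ_G is the maximum clique size of G. -/

import Mathlib

open SimpleGraph

variable {V : Type*}

/-- Two distinct letters `x` and `y` alternate in a word `w` if the subsequence of `w`
consisting of all occurrences of `x` and `y` is strictly alternating. -/
def Alternates [DecidableEq V] (x y : V) (w : List V) : Prop :=
  (w.filter (fun z => decide (z = x ∨ z = y))).Chain' (· ≠ ·)

/-- A word `w` represents the graph `G` if it contains every vertex at least once and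
two distinct vertices are adjacent iff they alternate in `w`. -/
def Represents [DecidableEq V] (G : SimpleGraph V) (w : List V) : Prop :=
  (∀ v : V, v ∈ w) ∧ ∀ x y : V, x ≠ y → (G.Adj x y ↔ Alternates x y w)

/-- A graph is word-representable if some word represents it. -/
def WordRepresentable [DecidableEq V] (G : SimpleGraph V) : Prop :=
  ∃ w : List V, Represents G w

/-- `l(G)`: the minimum length of a word-representant of `G`. -/
noncomputable def reprLen [DecidableEq V] (G : SimpleGraph V) : ℕ :=
  sInf {n | ∃ w : List V, Represents G w ∧ w.length = n}

/-- The rooted product `G ∘ H` with root `r : U`: copies of `H` indexed by `V(G)`,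
with each vertex `u` of `G` identified with the root of the `u`-th copy. -/
def rootedProd {U : Type*} (G : SimpleGraph V) (H : SimpleGraph U) (r : U) :
    SimpleGraph (V × U) where
  Adj p q := (p.1 = q.1 ∧ H.Adj p.2 q.2) ∨ (p.2 = r ∧ q.2 = r ∧ G.Adj p.1 q.1)
  symm := by
    refine ⟨?_⟩
    intro p q h
    rcases h with ⟨h1, h2⟩ | ⟨h1, h2, h3⟩
    · exact Or.inl ⟨h1.symm, h2.symm⟩
    · exact Or.inr ⟨h2, h1, h3.symm⟩
  loopless := by
    refine ⟨?_⟩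
    intro p h
    rcases h with ⟨_, h2⟩ | ⟨_, _, h3⟩
    · exact h2.ne rfl
    · exact h3.ne rfl


/-!
Take shortest words `wG` for `G` and `wH` for `H`, and split `wH = F ++ B` right after the last
occurrence of the root `r`; then `D := wH.dedup`, the vertices of `H` ordered by last
occurrence, has the form `Q ++ r :: B.dedup`. The word for `G ∘ H` first runs through `F`,
writing every letter once in each copy (the copies ordered by first occurrence in `wG`), and then
follows `wG`, writing at each occurrence of `v` the next block of copy `v`; every block contains
exactly one root.

Copy `v`, occurring `c` times in `wG`, then reads `wH ++ D^c`, followed by `Q` when `c = 1`;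
appending a prefix of the last-occurrence order keeps every pair alternating or not, so this
represents `H`. The roots read `π^t ++ wG` with `π` the first-occurrence order, which represents
`G` by the mirror argument. The first block of each copy contains every non-root letter twice, so
no pair from different copies, other than two roots, alternates. Only the vertices occurring
once in `wG` pay the extra `|Q| ≤ n - 1`, and they pairwise alternate, so they form a clique.
-/

open List

namespace List

variable {α : Type*} [DecidableEq α]

theorem filter_dedup (p : α → Bool) (l : List α) : l.dedup.filter p = (l.filter p).dedup := by
  induction l with
  | nil => rfl
  | cons a l ih =>
    by_cases ha : a ∈ l <;> by_cases hp : p a <;>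
      simp [dedup_cons_of_mem, dedup_cons_of_notMem, ha, hp, ih, mem_filter]

theorem dedup_head?_ne_getLast? {s : List α} {a b : α} (ha : a ∈ s) (hb : b ∈ s)
    (hab : a ≠ b) :
    s.dedup.head? ≠ s.getLast? := by
  intro h
  obtain ⟨g, hg⟩ : ∃ g, s.getLast? = some g :=
    Option.isSome_iff_exists.1 (getLast?_isSome.2 (ne_nil_of_mem ha))
  obtain ⟨s', rfl⟩ := getLast?_eq_some_iff.1 hg
  obtain ⟨X, hX⟩ : [g] <:+ (s' ++ [g]).dedup := by
    rw [dedup_append]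
    exact suffix_union_right _ _
  obtain ⟨Y, hY⟩ := head?_eq_some_iff.1 (h.trans hg)
  have hnd := nodup_dedup (s' ++ [g])
  obtain rfl : X = [] := by
    rcases X with _ | ⟨c, X⟩
    · rfl
    · rw [← hX] at hY hnd
      obtain rfl : c = g := (cons.inj hY).1
      simp at hnd
  have hall : ∀ z ∈ s' ++ [g], z = g := fun z hz => by simpa [← hX] using mem_dedup.2 hz
  exact hab ((hall a ha).trans (hall b hb).symm)

theorem isChain_ne_append_prefix_dedup {s t : List α} {a b : α} (ha : a ∈ s) (hb : b ∈ s)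
    (hab : a ≠ b) (ht : t <+: s.dedup) :
    (s ++ t).IsChain (· ≠ ·) ↔ s.IsChain (· ≠ ·) := by
  have htc : t.IsChain (· ≠ ·) := ((nodup_dedup s).sublist ht.sublist).isChain
  refine ⟨fun h => (isChain_append.1 h).1, fun hs => isChain_append.2 ⟨hs, htc, ?_⟩⟩
  rintro g hg o ho rfl
  obtain ⟨t', rfl⟩ := head?_eq_some_iff.1 (Option.mem_def.1 ho)
  obtain ⟨Y, hY⟩ := ht
  exact dedup_head?_ne_getLast? ha hb hab (by rw [← hY, Option.mem_def.1 hg]; rfl)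

theorem dedup_append_dedup_pow (w : List α) (k : ℕ) :
    (w ++ (replicate k w.dedup).flatten).dedup = w.dedup := by
  cases k with
  | zero => simp
  | succ k =>
    rw [replicate_succ', flatten_append, flatten_singleton, ← append_assoc,
      Subset.dedup_append_right, (nodup_dedup w).dedup]
    intro z hz
    simp only [mem_append, mem_flatten, mem_replicate] at hz
    rcases hz with hz | ⟨_, ⟨_, rfl⟩, hz⟩
    exacts [mem_dedup.2 hz, hz]

theorem exists_eq_append_dedup_of_mem {r : α} {w : List α} (hr : r ∈ w) :
    ∃ F B Q, w = F ++ B ∧ r ∉ B ∧ w.dedup = Q ++ r :: B.dedup := by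
  obtain ⟨A, B, rfl, hB⟩ : ∃ A B, w = A ++ r :: B ∧ r ∉ B := by
    induction w with
    | nil => simp at hr
    | cons a w ih =>
      by_cases h : r ∈ w
      · obtain ⟨A, B, rfl, hB⟩ := ih h
        exact ⟨a :: A, B, rfl, hB⟩
      · obtain rfl : r = a := by simpa [h] using hr
        exact ⟨[], w, rfl, h⟩
  obtain ⟨Q, hQ⟩ := suffix_union_right A (r :: B.dedup)
  refine ⟨A ++ [r], B, Q, by simp, hB, ?_⟩
  rw [dedup_append, dedup_cons_of_notMem hB, hQ]

theorem sum_count_eq_length [Fintype α] (l : List α) : ∑ a, l.count a = l.length := by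
  simpa using Multiset.sum_count_eq_card (s := Finset.univ) (m := (l : Multiset α))
    (fun _ _ => Finset.mem_univ _)

theorem append_flatten_replicate_append {β : Type*} (a b : List β) (c : ℕ) :
    a ++ (replicate c (b ++ a)).flatten = (replicate c (a ++ b)).flatten ++ a := by
  induction c with
  | zero => simp
  | succ c ih => simp only [replicate_succ, flatten_cons, append_assoc, ih]

end List

section WordRepresentation

variable {α : Type*} [DecidableEq α] {G : SimpleGraph α} {x y : α} {w : List α}

theorem alternates_iff_isChain :
    Alternates x y w ↔ (w.filter fun z => decide (z = x ∨ z = y)).IsChain (· ≠ ·) :=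
  Iff.rfl

theorem alternates_comm : Alternates x y w ↔ Alternates y x w := by
  simp only [alternates_iff_isChain, or_comm]

theorem alternates_reverse : Alternates x y w.reverse ↔ Alternates x y w := by
  simp only [alternates_iff_isChain, filter_reverse, isChain_reverse, ne_comm]

theorem alternates_filter {p : α → Bool} (hx : p x) (hy : p y) (W : List α) :
    Alternates x y (W.filter p) ↔ Alternates x y W := by
  rw [alternates_iff_isChain, alternates_iff_isChain, filter_filter]
  congr! 2
  grind

theorem alternates_map {β : Type*} [DecidableEq β] {f : α → β} (hf : Function.Injective f)
    (l : List α) : Alternates (f x) (f y) (l.map f) ↔ Alternates x y l := by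
  simp only [alternates_iff_isChain, filter_map, isChain_map, Function.comp_def, hf.eq_iff,
    hf.ne_iff]

theorem alternates_of_count_le_one (hx : w.count x ≤ 1) (hy : w.count y ≤ 1) :
    Alternates x y w := by
  refine Pairwise.isChain (nodup_iff_count_le_one.2 fun a => ?_)
  by_cases ha : a = x ∨ a = y
  · rw [count_filter (by simpa using ha)]
    rcases ha with rfl | rfl <;> assumption
  · rw [count_eq_zero_of_not_mem fun h => ha (by simpa using (mem_filter.1 h).2)]
    exact zero_le_one

theorem not_alternates_of_infix {l W : List α} (hl : l <:+: W) (hy : y ∉ l)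
    (hx : 2 ≤ l.count x) : ¬ Alternates x y W := by
  intro h
  have hfl : l.filter (fun z => decide (z = x ∨ z = y)) = replicate (l.count x) x := by
    rw [← filter_eq]
    exact filter_congr fun z hz => by grind
  obtain ⟨k, hk⟩ := Nat.exists_eq_add_of_le' hx
  have := h.infix (hl.filter _)
  rw [hfl, hk, replicate_succ, replicate_succ, isChain_cons_cons] at this
  exact this.1 rfl

theorem Represents.reverse (hw : Represents G w) : Represents G w.reverse :=
  ⟨fun v => mem_reverse.2 (hw.1 v), fun x y hxy => (hw.2 x y hxy).trans alternates_reverse.symm⟩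

theorem Represents.append_prefix_dedup (hw : Represents G w) {L : List α} (hL : L <+: w.dedup) :
    Represents G (w ++ L) := by
  refine ⟨fun v => mem_append_left _ (hw.1 v), fun x y hxy => ?_⟩
  have hx : x ∈ w.filter (fun z => decide (z = x ∨ z = y)) := mem_filter.2 ⟨hw.1 x, by simp⟩
  have hy : y ∈ w.filter (fun z => decide (z = x ∨ z = y)) := mem_filter.2 ⟨hw.1 y, by simp⟩
  rw [hw.2 x y hxy, alternates_iff_isChain, alternates_iff_isChain, filter_append,
    isChain_ne_append_prefix_dedup hx hy hxy (by rw [← filter_dedup]; exact hL.filter _)]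

theorem Represents.append_dedup_pow (hw : Represents G w) (k : ℕ) :
    Represents G (w ++ (replicate k w.dedup).flatten) := by
  induction k with
  | zero => simpa using hw
  | succ k ih =>
    have h := ih.append_prefix_dedup (L := w.dedup) (by rw [dedup_append_dedup_pow])
    rwa [append_assoc, ← flatten_concat, ← replicate_succ'] at h

theorem Represents.initPerm_pow_append (hw : Represents G w) (k : ℕ) :
    Represents G ((replicate k w.reverse.dedup.reverse).flatten ++ w) := by
  simpa [reverse_flatten] using (hw.reverse.append_dedup_pow k).reverse

open Finset in
theorem Represents.card_count_eq_one_le_cliqueNum [Fintype α] (hw : Represents G w) :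
    #{v | w.count v = 1} ≤ G.cliqueNum := by
  refine SimpleGraph.IsClique.card_le_cliqueNum (tc := fun a ha b hb hab => ?_)
  simp only [coe_filter, mem_univ, true_and] at ha hb
  exact (hw.2 a b hab).2 (alternates_of_count_le_one ha.le hb.le)

theorem Represents.reprLen_le (hw : Represents G w) : reprLen G ≤ w.length := by
  unfold reprLen
  exact Nat.sInf_le ⟨w, hw, rfl⟩

theorem WordRepresentable.exists_length_eq_reprLen (hG : WordRepresentable G) :
    ∃ w, Represents G w ∧ w.length = reprLen G := by
  obtain ⟨w, hw⟩ := hG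
  exact Nat.sInf_mem (s := {n | ∃ w : List α, Represents G w ∧ w.length = n})
    ⟨_, w, hw, rfl⟩

end WordRepresentation

section Projections

variable {V U : Type*}

def copyProj [DecidableEq V] (v : V) (W : List (V × U)) : List U :=
  (W.filter (·.1 = v)).map Prod.snd

def rootProj [DecidableEq U] (r : U) (W : List (V × U)) : List V :=
  (W.filter (·.2 = r)).map Prod.fst

@[simp]
theorem copyProj_append [DecidableEq V] (v : V) (W W' : List (V × U)) :
    copyProj v (W ++ W') = copyProj v W ++ copyProj v W' := by
  simp [copyProj]

@[simp]
theorem rootProj_append [DecidableEq U] (r : U) (W W' : List (V × U)) :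
    rootProj r (W ++ W') = rootProj r W ++ rootProj r W' := by
  simp [rootProj]

@[simp]
theorem copyProj_map_mk [DecidableEq V] (v w : V) (b : List U) :
    copyProj v (b.map (Prod.mk w)) = if w = v then b else [] := by
  split_ifs with h <;> simp [copyProj, filter_map, Function.comp_def, h]

@[simp]
theorem rootProj_map_mk [DecidableEq U] (r : U) (w : V) (b : List U) :
    rootProj r (b.map (Prod.mk w)) = replicate (b.count r) w := by
  simp [rootProj, filter_map, Function.comp_def, filter_eq]

theorem length_eq_sum_copyProj [Fintype V] [DecidableEq V] (W : List (V × U)) :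
    W.length = ∑ v, (copyProj v W).length := by
  rw [← length_map (f := Prod.fst), ← sum_count_eq_length]
  refine Finset.sum_congr rfl fun v _ => ?_
  rw [copyProj, length_map, count_eq_countP, countP_map, countP_eq_length_filter]
  rfl

variable [DecidableEq V] [DecidableEq U]

theorem alternates_mk_iff (v : V) {a b : U} (W : List (V × U)) :
    Alternates (v, a) (v, b) W ↔ Alternates a b (copyProj v W) := by
  have hW : (copyProj v W).map (Prod.mk v) = W.filter (·.1 = v) := by
    rw [copyProj, List.map_map]
    conv_rhs => rw [← map_id (W.filter _)]
    refine map_congr_left fun z hz => ?_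
    simp [← (of_decide_eq_true (mem_filter.1 hz).2 : z.1 = v)]
  rw [← alternates_map (Prod.mk_right_injective v) (copyProj v W) (x := a) (y := b), hW,
    alternates_filter (by simp) (by simp)]

theorem alternates_mk_root_iff (r : U) {x y : V} (W : List (V × U)) :
    Alternates (x, r) (y, r) W ↔ Alternates x y (rootProj r W) := by
  have hW : (rootProj r W).map (·, r) = W.filter (·.2 = r) := by
    rw [rootProj, List.map_map]
    conv_rhs => rw [← map_id (W.filter _)]
    refine map_congr_left fun z hz => ?_
    simp [← (of_decide_eq_true (mem_filter.1 hz).2 : z.2 = r)]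
  rw [← alternates_map (Prod.mk_left_injective r) (rootProj r W) (x := x) (y := y), hW,
    alternates_filter (by simp) (by simp)]

theorem represents_rootedProd_of_proj {G : SimpleGraph V} {H : SimpleGraph U} {r : U}
    {W : List (V × U)} (hcopy : ∀ v, Represents H (copyProj v W))
    (hroot : Represents G (rootProj r W))
    (hcross : ∀ x, ∀ u ≠ r, ∃ B : List U, B.map (Prod.mk x) <:+: W ∧ 2 ≤ B.count u) :
    Represents (rootedProd G H r) W := by
  have hsep : ∀ {x y : V} {u u' : U}, x ≠ y → u ≠ r → ¬ Alternates (x, u) (y, u') W := by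
    intro x y u u' hxy hu
    obtain ⟨B, hBW, hB⟩ := hcross x u hu
    refine not_alternates_of_infix hBW (by simp [hxy]) (hB.trans_eq ?_)
    convert (count_map_of_injective B _ (Prod.mk_right_injective x) u).symm
  refine ⟨fun ⟨v, u⟩ => ?_, fun ⟨x, u⟩ ⟨y, u'⟩ hne => ?_⟩
  · obtain ⟨⟨v', u⟩, hz, rfl⟩ := mem_map.1 ((hcopy v).1 u)
    obtain ⟨hzW, hzv⟩ := mem_filter.1 hz
    rwa [← of_decide_eq_true hzv]
  by_cases hxy : x = y
  · subst hxy
    have huu : u ≠ u' := fun h => hne (by rw [h])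
    rw [alternates_mk_iff, ← (hcopy x).2 u u' huu]
    simp [rootedProd]
  by_cases hu : u = r <;> by_cases hu' : u' = r
  · subst hu hu'
    rw [alternates_mk_root_iff, ← hroot.2 x y hxy]
    simp [rootedProd, hxy]
  · subst hu
    rw [alternates_comm]
    exact iff_of_false (by simp [rootedProd, hxy, hu']) (hsep (Ne.symm hxy) hu')
  all_goals exact iff_of_false (by simp [rootedProd, hxy, hu]) (hsep hxy hu)

end Projections

section Weaving

variable {V U : Type*}

def spread (π : List V) (F : List U) : List (V × U) :=
  F.flatMap fun u => π.map (·, u)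

theorem copyProj_spread [DecidableEq V] {π : List V} (hπ : π.Nodup) {v : V} (hv : v ∈ π)
    (F : List U) : copyProj v (spread π F) = F := by
  induction F with
  | nil => rfl
  | cons u F ih =>
    rw [spread, flatMap_cons, copyProj_append, ← spread, ih]
    simp [copyProj, filter_map, Function.comp_def, filter_eq, hπ.count, hv]

theorem rootProj_spread [DecidableEq U] (π : List V) (r : U) (F : List U) :
    rootProj r (spread π F) = (replicate (F.count r) π).flatten := by
  induction F with
  | nil => rfl
  | cons u F ih =>
    rw [spread, flatMap_cons, rootProj_append, ← spread, ih]
    by_cases hu : u = r <;> simp [rootProj, filter_map, Function.comp_def, hu, replicate_succ]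

/-- At the `i`-th occurrence of `v` in `l`, write the `i`-th block of `Q v` into copy `v`. -/
def weave [DecidableEq V] : List V → (V → List (List U)) → List (V × U)
  | [], _ => []
  | v :: l, Q => ((Q v).headD []).map (Prod.mk v) ++ weave l (Function.update Q v (Q v).tail)

variable [DecidableEq V]

theorem copyProj_weave (v : V) (l : List V) (Q : V → List (List U)) :
    copyProj v (weave l Q) = ((Q v).take (l.count v)).flatten := by
  induction l generalizing Q with
  | nil => simp [weave, copyProj]
  | cons w l ih =>
    rw [weave, copyProj_append, ih, copyProj_map_mk]
    by_cases hw : w = v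
    · subst hw
      rcases Q w with _ | ⟨b, bs⟩ <;> simp
    · simp [hw, Function.update_of_ne (Ne.symm hw)]

theorem rootProj_weave [DecidableEq U] (r : U) {l : List V} {Q : V → List (List U)}
    (hQ : ∀ w, l.count w ≤ (Q w).length) (hr : ∀ w, ∀ b ∈ Q w, b.count r = 1) :
    rootProj r (weave l Q) = l := by
  induction l generalizing Q with
  | nil => rfl
  | cons w l ih =>
    obtain ⟨b, bs, hb⟩ :=
      exists_cons_of_length_pos ((count_pos_iff.2 mem_cons_self).trans_le (hQ w))
    rw [weave, rootProj_append, rootProj_map_mk, hb, headD_cons, hr w b (by simp [hb]), ih]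
    · rfl
    · intro w'
      have := hQ w'
      by_cases h : w' = w
      · subst h
        simp_all
      · simpa [Function.update_of_ne h, count_cons_of_ne (Ne.symm h)] using this
    · intro w' b' hb'
      by_cases h : w' = w
      · subst h
        simp only [Function.update_self, tail_cons] at hb'
        exact hr w' b' (by simp [hb, hb'])
      · exact hr w' b' (by rwa [Function.update_of_ne h] at hb')

theorem infix_weave {v : V} {l : List V} (hv : v ∈ l) (Q : V → List (List U)) :
    ((Q v).headD []).map (Prod.mk v) <:+: weave l Q := by
  induction l generalizing Q with
  | nil => simp at hv
  | cons w l ih =>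
    rw [weave]
    by_cases hw : w = v
    · subst hw
      exact (prefix_append _ _).isInfix
    · have := ih (mem_of_ne_of_mem (Ne.symm hw) hv) (Function.update Q w (Q w).tail)
      rw [Function.update_of_ne (Ne.symm hw)] at this
      exact this.trans (suffix_append _ _).isInfix

end Weaving

section ProductWord

variable {U : Type*} [DecidableEq U]

/-- Each block holds exactly one `r`, and the first one holds every letter of `Q` and of `B`
at least twice. -/
def copyBlocks (r : U) (B Q : List U) : ℕ → List (List U)
  | 0 => []
  | 1 => [B ++ Q ++ r :: B.dedup ++ Q]
  | c + 2 => (B ++ Q ++ r :: B.dedup ++ Q) :: (replicate c (r :: B.dedup ++ Q) ++ [r :: B.dedup])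

variable {r : U} {B Q : List U}

theorem length_copyBlocks (c : ℕ) : (copyBlocks r B Q c).length = c := by
  rcases c with _ | _ | c <;> simp [copyBlocks]

theorem headD_copyBlocks {c : ℕ} (hc : c ≠ 0) :
    (copyBlocks r B Q c).headD [] = B ++ Q ++ r :: B.dedup ++ Q := by
  rcases c with _ | _ | c
  exacts [absurd rfl hc, rfl, rfl]

theorem count_eq_one_of_mem_copyBlocks (hB : r ∉ B) (hQ : r ∉ Q) {c : ℕ} {b : List U}
    (hb : b ∈ copyBlocks r B Q c) : b.count r = 1 := by
  have hB' : r ∉ B.dedup := fun h => hB (mem_dedup.1 h)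
  rcases c with _ | _ | c <;> simp [copyBlocks] at hb
  all_goals rcases hb with rfl | ⟨-, rfl⟩ | rfl <;> simp [count_eq_zero_of_not_mem, hB, hQ, hB']

theorem flatten_copyBlocks {c : ℕ} (hc : c ≠ 0) :
    (copyBlocks r B Q c).flatten =
      B ++ (replicate c (Q ++ r :: B.dedup)).flatten ++ if c = 1 then Q else [] := by
  rcases c with _ | _ | c
  · exact absurd rfl hc
  · simp [copyBlocks]
  · simpa [copyBlocks, replicate_succ] using
      (append_flatten_replicate_append (r :: B.dedup) Q c).symm

variable {V : Type*} [DecidableEq V]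

def productWord (r : U) (wG : List V) (F B Q : List U) : List (V × U) :=
  spread wG.reverse.dedup.reverse F ++ weave wG fun v => copyBlocks r B Q (wG.count v)

variable {wG : List V} {F : List U}

theorem copyProj_productWord {v : V} (hv : v ∈ wG) :
    copyProj v (productWord r wG F B Q) = F ++ B ++
      (replicate (wG.count v) (Q ++ r :: B.dedup)).flatten ++
        if wG.count v = 1 then Q else [] := by
  rw [productWord, copyProj_append, copyProj_spread (nodup_reverse.2 (nodup_dedup _))
    (by simpa using hv), copyProj_weave, take_of_length_le (length_copyBlocks _).le,
    flatten_copyBlocks (count_pos_iff.2 hv).ne']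
  simp only [append_assoc]

theorem rootProj_productWord (hB : r ∉ B) (hQ : r ∉ Q) :
    rootProj r (productWord r wG F B Q) =
      (replicate (F.count r) wG.reverse.dedup.reverse).flatten ++ wG := by
  rw [productWord, rootProj_append, rootProj_spread,
    rootProj_weave r (fun w => (length_copyBlocks _).ge)
      (fun _ _ hb => count_eq_one_of_mem_copyBlocks hB hQ hb)]

theorem represents_productWord {G : SimpleGraph V} {H : SimpleGraph U} (hG : Represents G wG)
    (hH : Represents H (F ++ B)) (hB : r ∉ B) (hD : (F ++ B).dedup = Q ++ r :: B.dedup) :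
    Represents (rootedProd G H r) (productWord r wG F B Q) := by
  have hQ : r ∉ Q := by
    have := nodup_dedup (F ++ B)
    rw [hD, nodup_append] at this
    exact fun h => this.2.2 r h r mem_cons_self rfl
  refine represents_rootedProd_of_proj (fun v => ?_) ?_ fun x u hu => ?_
  · rw [copyProj_productWord (hG.1 v), ← hD]
    refine (hH.append_dedup_pow _).append_prefix_dedup ?_
    rw [dedup_append_dedup_pow, hD]
    split_ifs
    exacts [prefix_append _ _, nil_prefix]
  · rw [rootProj_productWord hB hQ]
    exact hG.initPerm_pow_append _
  · refine ⟨B ++ Q ++ r :: B.dedup ++ Q, ?_, ?_⟩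
    · have := infix_weave (hG.1 x) fun v => copyBlocks r B Q (wG.count v)
      rw [headD_copyBlocks (count_pos_iff.2 (hG.1 x)).ne'] at this
      exact this.trans (suffix_append _ _).isInfix
    · have hu' : u ∈ Q ++ r :: B.dedup := hD ▸ mem_dedup.2 (hH.1 u)
      simp only [mem_append, mem_cons, hu, false_or, mem_dedup] at hu'
      rcases hu' with h | h
      · have := count_pos_iff.2 h
        simp only [count_append, count_cons]
        omega
      · have := count_pos_iff.2 h
        have := count_pos_iff.2 (mem_dedup.2 h)
        simp only [count_append, count_cons]
        omega

open Finset in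
theorem length_productWord_le [Fintype V] [Fintype U] (hwG : ∀ v, v ∈ wG)
    (hD : (F ++ B).dedup = Q ++ r :: B.dedup) :
    (productWord r wG F B Q).length ≤ Fintype.card U * wG.length +
      Fintype.card V * (F ++ B).length + (Fintype.card U - 1) * #{v | wG.count v = 1} := by
  have hn : (Q ++ r :: B.dedup).length ≤ Fintype.card U := hD ▸ (nodup_dedup _).length_le_card
  have hQ : Q.length ≤ Fintype.card U - 1 := by
    simp only [length_append, length_cons] at hn
    omega
  calc (productWord r wG F B Q).length
      = ∑ v, ((F ++ B).length + wG.count v * (Q ++ r :: B.dedup).length +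
          if wG.count v = 1 then Q.length else 0) := by
        rw [length_eq_sum_copyProj]
        refine sum_congr rfl fun v _ => ?_
        rw [copyProj_productWord (hwG v)]
        split_ifs <;> simp <;> ring
    _ ≤ ∑ v, ((F ++ B).length + wG.count v * Fintype.card U +
          if wG.count v = 1 then Fintype.card U - 1 else 0) := by
        gcongr with v
        split_ifs <;> simp [hQ]
    _ = _ := by
        rw [sum_add_distrib, sum_add_distrib, ← sum_mul, sum_count_eq_length, sum_ite,
          sum_const_zero, sum_const, sum_const, card_univ]
        simp only [smul_eq_mul]
        ring

end ProductWord

theorem stmt19 {U : Type*} [Fintype V] [Fintype U] [DecidableEq V] [DecidableEq U]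
    (G : SimpleGraph V) (H : SimpleGraph U) (r : U)
    (hG : WordRepresentable G) (hH : WordRepresentable H) :
    reprLen (rootedProd G H r) ≤ Fintype.card U * reprLen G +
      Fintype.card V * reprLen H + (Fintype.card U - 1) * G.cliqueNum := by
  obtain ⟨wG, hwG, hlenG⟩ := hG.exists_length_eq_reprLen
  obtain ⟨wH, hwH, hlenH⟩ := hH.exists_length_eq_reprLen
  obtain ⟨F, B, Q, rfl, hB, hD⟩ := exists_eq_append_dedup_of_mem (hwH.1 r)
  calc reprLen (rootedProd G H r)
      ≤ (productWord r wG F B Q).length := (represents_productWord hwG hwH hB hD).reprLen_le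
    _ ≤ Fintype.card U * wG.length + Fintype.card V * (F ++ B).length +
          (Fintype.card U - 1) * _ := length_productWord_le hwG.1 hD
    _ ≤ _ := by
        rw [hlenG, hlenH]
        gcongr
        exact hwG.card_count_eq_one_le_cliqueNum
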